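/- Let Q be a real-entried matrix of size m × n (viewed in ℂ), and let M : Matrix (Fin m) (Fin n) ℂ, U : Matrix (Fin m) (Fin r) ℂ, Y : Matrix (Fin r) (Fin n) ℂ. Define the gradient g = −Uᴴ ⬝ ((Q ∘ Q) ∘ (M − U ⬝ Y)), where ∘ is entrywise (Hadamard) multiplication. Let d : Matrix (Fin r) (Fin n) ℂ be any descent direction with ‖Q ∘ (U ⬝ d)‖_F ≠ 0, set γ = Re⟨g, d⟩_F and μ = γ / ‖Q ∘ (U ⬝ d)‖_F². Then the exact line-search decrease identity holds: (1/2)‖Q ∘ (M − U ⬝ (Y − μ • d))‖_F² = (1/2)‖Q ∘ (M − U ⬝ Y)‖_F² − γ² / (2‖Q ∘ (U ⬝ d)‖_F²). -/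

import Mathlib

open Finset Matrix

/-- Frobenius norm of a complex matrix. -/
noncomputable def frobNorm {m n : Type*} [Fintype m] [Fintype n]
    (A : Matrix m n ℂ) : ℝ :=
  Real.sqrt (∑ i, ∑ j, ‖A i j‖ ^ 2)

/-- Frobenius inner product of complex matrices. -/
noncomputable def frobInner {m n : Type*} [Fintype m] [Fintype n]
    (A B : Matrix m n ℂ) : ℂ :=
  ∑ i, ∑ j, starRingEnd ℂ (A i j) * B i j

/-! Writing `R = Q ⊙ (M - U Y)` and `S = Q ⊙ (U d)`, the step `Y ↦ Y - μ d` changes the weighted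
residual to `R + μ S`, so the objective is the quadratic `½‖R‖² + μ Re⟨R, S⟩ + ½ μ² ‖S‖²` in `μ`.
Since `Q` is real, moving `Uᴴ` and one factor `Q` across the inner product gives
`Re⟨g, d⟩ = -Re⟨R, S⟩`, so the chosen `μ` is the minimiser of that quadratic and the decrease
is its minimum value. -/

section Frobenius

variable {m n p : Type*} [Fintype m] [Fintype n] [Fintype p]

lemma frobNorm_sq (A : Matrix m n ℂ) :
    frobNorm A ^ 2 = ∑ i, ∑ j, Complex.normSq (A i j) := by
  rw [frobNorm, Real.sq_sqrt (by positivity)]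
  simp only [Complex.sq_norm]

lemma frobInner_eq_trace (A B : Matrix m n ℂ) : frobInner A B = trace (Aᴴ * B) := by
  simp only [frobInner, trace, Matrix.diag, mul_apply, conjTranspose_apply, starRingEnd_apply]
  exact Finset.sum_comm

lemma frobInner_neg_left (A B : Matrix m n ℂ) : frobInner (-A) B = -frobInner A B := by
  simp [frobInner]

lemma frobInner_conjTranspose_mul_left (U : Matrix m p ℂ) (A : Matrix m n ℂ)
    (B : Matrix p n ℂ) : frobInner (Uᴴ * A) B = frobInner A (U * B) := by
  rw [frobInner_eq_trace, frobInner_eq_trace, conjTranspose_mul, conjTranspose_conjTranspose,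
    Matrix.mul_assoc]

lemma frobInner_hadamard_left (P A B : Matrix m n ℂ) :
    frobInner (P ⊙ A) B = frobInner A (P.map star ⊙ B) := by
  simp only [frobInner, hadamard_apply, map_apply, map_mul, starRingEnd_apply]
  exact Finset.sum_congr rfl fun i _ => Finset.sum_congr rfl fun j _ => by ring

lemma Complex.normSq_add_ofReal_mul (a b : ℂ) (t : ℝ) :
    Complex.normSq (a + t * b) =
      Complex.normSq a + 2 * t * (starRingEnd ℂ a * b).re + t ^ 2 * Complex.normSq b := by
  simp only [Complex.normSq_apply, Complex.add_re, Complex.add_im, Complex.mul_re,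
    Complex.mul_im, Complex.ofReal_re, Complex.ofReal_im, Complex.conj_re, Complex.conj_im]
  ring

lemma frobNorm_add_smul_sq (A B : Matrix m n ℂ) (t : ℝ) :
    frobNorm (A + (t : ℂ) • B) ^ 2 =
      frobNorm A ^ 2 + 2 * t * (frobInner A B).re + t ^ 2 * frobNorm B ^ 2 := by
  simp only [frobNorm_sq, frobInner, Complex.re_sum, Finset.mul_sum, ← Finset.sum_add_distrib,
    Matrix.add_apply, Matrix.smul_apply, smul_eq_mul, Complex.normSq_add_ofReal_mul]

end Frobenius

/-- Exact line-search decrease identity for the gradient step in `Y`. -/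
theorem exact_linesearch_Y {m n r : ℕ}
    (Q : Matrix (Fin m) (Fin n) ℂ) (hQ : ∀ i j, (Q i j).im = 0)
    (M : Matrix (Fin m) (Fin n) ℂ) (U : Matrix (Fin m) (Fin r) ℂ)
    (Y : Matrix (Fin r) (Fin n) ℂ)
    (g : Matrix (Fin r) (Fin n) ℂ)
    (hg : g = -(Uᴴ * ((Q ⊙ Q) ⊙ (M - U * Y))))
    (d : Matrix (Fin r) (Fin n) ℂ)
    (hd : frobNorm (Q ⊙ (U * d)) ≠ 0)
    (γ : ℝ) (hγ : γ = (frobInner g d).re)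
    (μ : ℝ) (hμ : μ = γ / frobNorm (Q ⊙ (U * d)) ^ 2) :
    (1 / 2) * frobNorm (Q ⊙ (M - U * (Y - (μ : ℂ) • d))) ^ 2 =
      (1 / 2) * frobNorm (Q ⊙ (M - U * Y)) ^ 2 -
        γ ^ 2 / (2 * frobNorm (Q ⊙ (U * d)) ^ 2) := by
  set R := Q ⊙ (M - U * Y)
  set S := Q ⊙ (U * d)
  have hQ_real : Q.map star = Q := ext fun i j => Complex.conj_eq_iff_im.mpr (hQ i j)
  have h_step : Q ⊙ (M - U * (Y - (μ : ℂ) • d)) = R + (μ : ℂ) • S := by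
    rw [Matrix.mul_sub, Matrix.mul_smul, ← sub_add, hadamard_add, hadamard_smul]
  have h_slope : (frobInner R S).re = -γ := by
    rw [hγ, hg, frobInner_neg_left, frobInner_conjTranspose_mul_left, hadamard_assoc,
      frobInner_hadamard_left Q R, hQ_real, Complex.neg_re, neg_neg]
  rw [h_step, frobNorm_add_smul_sq, h_slope, hμ]
  field_simp
  ring
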